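/- Let q, t, ζ be complex numbers with |q| < 1, t ≠ 0, |tζ| < 1, and q not a root of unity. Then Σ_{k=0}^∞ [(t^{−2};q)_k / (q;q)_k] (1 + t^{−1} q^{k}) (tζ)^{k} = (1 + t^{−1}) (1 − ζ) ∏_{l=0}^∞ (1 − q^{l+1} t^{−1} ζ)/(1 − q^{l} t ζ). -/

import Mathlib

/-- The q-shifted factorial `(a;q)_n = ∏_{k=0}^{n−1} (1 − a q^k)`. -/
noncomputable def qp (q a : ℂ) (n : ℕ) : ℂ := ∏ k ∈ Finset.range n, (1 - a * q ^ k)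

open Filter Topology

lemma one_sub_ne {x : ℂ} (h : ‖x‖ < 1) : 1 - x ≠ 0 := by
  intro h0
  have : x = 1 := by linear_combination -h0
  simp [this] at h

lemma qpq_ne {q : ℂ} (hq : ‖q‖ < 1) (k : ℕ) : qp q q k ≠ 0 := by
  refine Finset.prod_ne_zero_iff.2 fun j _ => one_sub_ne ?_
  have h1 : ‖q‖ ^ j ≤ 1 := pow_le_one₀ (norm_nonneg q) hq.le
  rw [norm_mul, norm_pow]
  nlinarith [norm_nonneg q]

lemma qp_succ (q a : ℂ) (k : ℕ) : qp q a (k + 1) = qp q a k * (1 - a * q ^ k) :=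
  Finset.prod_range_succ _ _

lemma summable_c {q a z : ℂ} (hq : ‖q‖ < 1) (hz : ‖z‖ < 1) :
    Summable (fun k : ℕ => qp q a k / qp q q k * z ^ k) := by
  have hne : ∀ k : ℕ, (1 : ℂ) - q * q ^ k ≠ 0 := by
    intro k
    refine one_sub_ne ?_
    have h1 : ‖q‖ ^ k ≤ 1 := pow_le_one₀ (norm_nonneg q) hq.le
    rw [norm_mul, norm_pow]
    nlinarith [norm_nonneg q]
  have hstep : ∀ k : ℕ, qp q a (k+1) / qp q q (k+1) * z ^ (k+1)
      = (qp q a k / qp q q k * z ^ k) * ((1 - a * q ^ k) * z / (1 - q * q ^ k)) := by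
    intro k
    rw [qp_succ, qp_succ, pow_succ]
    field_simp [qpq_ne hq k, hne k]
  have hq0 : Tendsto (fun k : ℕ => q ^ k) atTop (𝓝 0) :=
    tendsto_pow_atTop_nhds_zero_of_norm_lt_one hq
  have h1 : Tendsto (fun k : ℕ => (1 - a * q ^ k) * z / (1 - q * q ^ k)) atTop (𝓝 z) := by
    have := (((hq0.const_mul a).const_sub 1).mul_const z).div
      ((hq0.const_mul q).const_sub 1) (by simp)
    simp only [mul_zero, sub_zero, one_mul, div_one] at this
    exact this
  have hev := h1.norm.eventually_lt_const (by linarith : ‖z‖ < (1 + ‖z‖)/2)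
  apply summable_of_ratio_norm_eventually_le (r := (1 + ‖z‖)/2) (by linarith)
  filter_upwards [hev] with k hk
  rw [hstep k, norm_mul, mul_comm]
  exact mul_le_mul_of_nonneg_right hk.le (norm_nonneg _)

lemma log_summable {g : ℕ → ℂ} (hs : Summable fun l => g l - 1) :
    Summable fun l => Complex.log (g l) := by
  have ht : Tendsto (fun l => g l - 1) atTop (𝓝 0) := hs.tendsto_atTop_zero
  have hev : ∀ᶠ l in atTop, ‖g l - 1‖ < 1/2 :=
    (ht.norm).eventually_lt_const (by norm_num)
  apply Summable.of_norm_bounded_eventually_nat (g := fun l => 3/2 * ‖g l - 1‖)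
    (hs.norm.mul_left _)
  filter_upwards [hev] with l hl
  have h := Complex.norm_log_one_add_half_le_self (z := g l - 1) hl.le
  rw [show (1 : ℂ) + (g l - 1) = g l by ring] at h
  exact h

lemma mult_of {g : ℕ → ℂ} (hs : Summable fun l => g l - 1) : Multipliable g := by
  by_cases h0 : ∀ l, g l ≠ 0
  · exact Complex.multipliable_of_summable_log (log_summable hs)
  · push_neg at h0
    obtain ⟨l0, hl0⟩ := h0
    refine ⟨0, ?_⟩
    have hz : ∀ᶠ s : Finset ℕ in atTop, (0 : ℂ) = ∏ i ∈ s, g i := by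
      filter_upwards [eventually_ge_atTop {l0}] with s hs'
      exact (Finset.prod_eq_zero (hs' (Finset.mem_singleton_self l0)) hl0).symm
    exact tendsto_const_nhds.congr' hz

lemma tprod_ne_zero {g : ℕ → ℂ} (h0 : ∀ l, g l ≠ 0) (hs : Summable fun l => g l - 1) :
    (∏' l, g l) ≠ 0 := by
  have h := Complex.cexp_tsum_eq_tprod h0 (log_summable hs)
  rw [← h]
  exact Complex.exp_ne_zero _

lemma summable_geom_mul {q w : ℂ} (hq : ‖q‖ < 1) :
    Summable fun l : ℕ => (1 - w * q ^ l) - 1 := by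
  have : Summable fun l : ℕ => w * q ^ l :=
    (summable_geometric_of_norm_lt_one hq).mul_left w
  exact this.neg.congr (fun l => by ring)

lemma den_ne {q c : ℂ} (hq : ‖q‖ < 1) (hc : ‖c‖ < 1) (l : ℕ) : (1 : ℂ) - c * q ^ l ≠ 0 := by
  refine one_sub_ne ?_
  rw [norm_mul, norm_pow]
  have h1 : ‖q‖ ^ l ≤ 1 := pow_le_one₀ (norm_nonneg q) hq.le
  nlinarith [norm_nonneg c]

lemma mult_P (q w : ℂ) (hq : ‖q‖ < 1) : Multipliable fun l : ℕ => 1 - w * q ^ l :=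
  mult_of (summable_geom_mul hq)

lemma P_ne {q w : ℂ} (hq : ‖q‖ < 1) (hw : ‖w‖ < 1) :
    (∏' l : ℕ, (1 - w * q ^ l)) ≠ 0 :=
  tprod_ne_zero (den_ne hq hw) (summable_geom_mul hq)

lemma P_shift (q w : ℂ) (hq : ‖q‖ < 1) :
    (∏' l : ℕ, (1 - w * q ^ l)) = (1 - w) * ∏' l : ℕ, (1 - (q * w) * q ^ l) := by
  have hm : Multipliable fun n : ℕ => 1 - w * q ^ (n + 1) :=
    (mult_P q (q * w) hq).congr (fun n => by rw [pow_succ']; ring)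
  rw [tprod_eq_zero_mul' (f := fun l : ℕ => 1 - w * q ^ l) hm]
  simp only [pow_zero, mul_one]
  congr 1
  exact tprod_congr fun n => by rw [pow_succ']; ring

lemma ratio_mul (q b c : ℂ) (hq : ‖q‖ < 1) (hc : ‖c‖ < 1) :
    (∏' l : ℕ, ((1 - b * q ^ l) / (1 - c * q ^ l))) * (∏' l : ℕ, (1 - c * q ^ l))
      = ∏' l : ℕ, (1 - b * q ^ l) := by
  have hden := fun l => den_ne hq hc (l := l)
  have hc1 : (0:ℝ) < 1 - ‖c‖ := by linarith
  have hsr : Summable fun l : ℕ => (1 - b * q ^ l) / (1 - c * q ^ l) - 1 := by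
    have hg : Summable fun l : ℕ => ‖c - b‖ / (1 - ‖c‖) * ‖q‖ ^ l :=
      (summable_geometric_of_lt_one (norm_nonneg q) hq).mul_left _
    apply Summable.of_norm_bounded hg
    intro l
    have heq : (1 - b * q ^ l) / (1 - c * q ^ l) - 1 = (c - b) * q ^ l / (1 - c * q ^ l) := by
      rw [div_sub_one (hden l)]
      congr 1
      ring
    rw [heq, norm_div, norm_mul, norm_pow]
    have h1 : 1 - ‖c‖ ≤ ‖1 - c * q ^ l‖ := by
      have h2 := norm_sub_norm_le (1 : ℂ) (c * q ^ l)
      rw [norm_one, norm_mul, norm_pow] at h2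
      have h3 : ‖c‖ * ‖q‖ ^ l ≤ ‖c‖ := by
        nlinarith [pow_le_one₀ (norm_nonneg q) hq.le (n := l), norm_nonneg c]
      linarith
    calc ‖c - b‖ * ‖q‖ ^ l / ‖1 - c * q ^ l‖
        ≤ ‖c - b‖ * ‖q‖ ^ l / (1 - ‖c‖) := by
          gcongr
      _ = ‖c - b‖ / (1 - ‖c‖) * ‖q‖ ^ l := by ring
  have hmr : Multipliable fun l : ℕ => (1 - b * q ^ l) / (1 - c * q ^ l) := mult_of hsr
  rw [← Multipliable.tprod_mul hmr (mult_P q c hq)]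
  exact tprod_congr fun l => div_mul_cancel₀ _ (hden l)

lemma func_eq {q a : ℂ} (hq : ‖q‖ < 1) {w : ℂ} (hw : ‖w‖ < 1) :
    (1 - w) * ∑' k : ℕ, qp q a k / qp q q k * w ^ k
      = (1 - a * w) * ∑' k : ℕ, qp q a k / qp q q k * (q * w) ^ k := by
  set c : ℕ → ℂ := fun k => qp q a k / qp q q k with hc
  have hqw : ‖q * w‖ < 1 := by
    rw [norm_mul]; nlinarith [norm_nonneg q, norm_nonneg w]
  have S1 : Summable fun k => c k * w ^ k := summable_c hq hw
  have S2 : Summable fun k => c k * (q * w) ^ k := summable_c hq hqw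
  set u : ℕ → ℂ := fun k => c k * (1 - q ^ k) * w ^ k with hudef
  have hu : Summable u :=
    (S1.sub S2).congr fun k => by simp only [hudef, mul_pow]; ring
  have hrec : ∀ k, c (k + 1) * (1 - q ^ (k + 1)) = c k * (1 - a * q ^ k) := by
    intro k
    simp only [hc, qp_succ]
    rw [pow_succ']
    rw [div_mul_eq_mul_div, div_mul_eq_mul_div,
      div_eq_div_iff (mul_ne_zero (qpq_ne hq k) (den_ne hq hq k)) (qpq_ne hq k)]
    ring
  have key2 : ∀ k, u (k + 1) = c k * w ^ k * w - c k * (q * w) ^ k * (a * w) := by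
    intro k
    have : u (k + 1) = c (k + 1) * (1 - q ^ (k + 1)) * w ^ (k + 1) := rfl
    rw [this, hrec k, mul_pow, pow_succ]
    ring
  have hB : Summable fun k => c k * w ^ k * w := S1.mul_right w
  have hC : Summable fun k => c k * (q * w) ^ k * (a * w) := S2.mul_right _
  have hST : ∑' k, u k = (∑' k, c k * w ^ k) - ∑' k, c k * (q * w) ^ k := by
    rw [← Summable.tsum_sub S1 S2]
    exact tsum_congr fun k => by simp only [hudef, mul_pow]; ring
  have hXY : ∑' k, u (k + 1)
      = (∑' k, c k * w ^ k * w) - ∑' k, c k * (q * w) ^ k * (a * w) := by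
    rw [← Summable.tsum_sub hB hC]
    exact tsum_congr fun k => key2 k
  have E2 : ∑' k, u (k + 1) = ∑' k, u k := by
    rw [Summable.tsum_eq_zero_add hu]
    have h0 : u 0 = 0 := by simp [hudef]
    rw [h0, zero_add]
  have h1 : (1 - w) * ∑' k, c k * w ^ k
      = (∑' k, c k * w ^ k) - ∑' k, c k * w ^ k * w := by
    rw [tsum_mul_right]; ring
  have h2 : (1 - a * w) * ∑' k, c k * (q * w) ^ k
      = (∑' k, c k * (q * w) ^ k) - ∑' k, c k * (q * w) ^ k * (a * w) := by
    rw [tsum_mul_right]; ring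
  rw [h1, h2]
  have := hXY.symm.trans E2
  rw [hST] at this
  linear_combination -this

lemma qbinom {q a z : ℂ} (hq : ‖q‖ < 1) (hz : ‖z‖ < 1) :
    (∑' k : ℕ, qp q a k / qp q q k * z ^ k) * (∏' l : ℕ, (1 - z * q ^ l))
      = ∏' l : ℕ, (1 - a * z * q ^ l) := by
  set c : ℕ → ℂ := fun k => qp q a k / qp q q k with hc
  set f : ℂ → ℂ := fun w => ∑' k : ℕ, c k * w ^ k with hfdef
  have hnormpow : ∀ n : ℕ, ‖q ^ n * z‖ < 1 := by
    intro n
    rw [norm_mul, norm_pow]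
    nlinarith [pow_le_one₀ (norm_nonneg q) hq.le (n := n), norm_nonneg z,
      pow_nonneg (norm_nonneg q) n]
  have hiter : ∀ n : ℕ, qp q z n * f z = qp q (a * z) n * f (q ^ n * z) := by
    intro n
    induction n with
    | zero => simp [qp]
    | succ n ih =>
      have hfe : (1 - q ^ n * z) * f (q ^ n * z)
          = (1 - a * (q ^ n * z)) * f (q ^ (n + 1) * z) := by
        have h := func_eq (a := a) hq (hnormpow n)
        have e1 : q * (q ^ n * z) = q ^ (n + 1) * z := by ring
        rw [e1] at h
        exact h
      rw [qp_succ q z n, qp_succ q (a * z) n]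
      linear_combination (1 - z * q ^ n) * ih + qp q (a * z) n * hfe
  -- limit of partial products
  have hm1 := mult_P q z hq
  have hm2 := mult_P q (a * z) hq
  have hT1 : Tendsto (fun n => qp q z n) atTop (𝓝 (∏' l : ℕ, (1 - z * q ^ l))) :=
    hm1.hasProd.tendsto_prod_nat
  have hT2 : Tendsto (fun n => qp q (a * z) n) atTop
      (𝓝 (∏' l : ℕ, (1 - a * z * q ^ l))) := by
    have := hm2.hasProd.tendsto_prod_nat
    simpa [qp, mul_assoc] using this
  -- limit of f (q^n z)
  have hnorm : Summable fun k => ‖c k * z ^ k‖ :=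
    summable_norm_iff.mpr (summable_c hq hz)
  have hKsum : Summable fun k => ‖c (k + 1)‖ * ‖z‖ ^ (k + 1) := by
    have := (summable_nat_add_iff 1).2 hnorm
    exact this.congr fun k => by rw [norm_mul, norm_pow]
  set K : ℝ := ∑' k : ℕ, ‖c (k + 1)‖ * ‖z‖ ^ (k + 1) with hK
  have hc0 : c 0 = 1 := by simp [hc, qp]
  have hbound : ∀ n : ℕ, ‖f (q ^ n * z) - 1‖ ≤ ‖q‖ ^ n * K := by
    intro n
    set w : ℂ := q ^ n * z with hwdef
    have hsw : Summable fun k => c k * w ^ k := summable_c hq (hnormpow n)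
    have hswn : Summable fun k => ‖c (k + 1) * w ^ (k + 1)‖ := by
      have h2 := (summable_nat_add_iff 1).2 (summable_norm_iff.mpr hsw)
      exact h2
    have hfw : f w - 1 = ∑' k : ℕ, c (k + 1) * w ^ (k + 1) := by
      rw [hfdef]
      simp only
      rw [Summable.tsum_eq_zero_add hsw, hc0]
      simp
    rw [hfw]
    refine le_trans (norm_tsum_le_tsum_norm hswn) ?_
    have hterm : ∀ k : ℕ, ‖c (k + 1) * w ^ (k + 1)‖
        ≤ ‖q‖ ^ n * (‖c (k + 1)‖ * ‖z‖ ^ (k + 1)) := by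
      intro k
      rw [norm_mul, hwdef, norm_pow, norm_mul, norm_pow, mul_pow, ← pow_mul]
      have h3 : ‖q‖ ^ (n * (k + 1)) ≤ ‖q‖ ^ n :=
        pow_le_pow_of_le_one (norm_nonneg q) hq.le (Nat.le_mul_of_pos_right n k.succ_pos)
      have h4 : (0:ℝ) ≤ ‖c (k+1)‖ := norm_nonneg _
      have h5 : (0:ℝ) ≤ ‖z‖ ^ (k+1) := pow_nonneg (norm_nonneg z) _
      calc ‖c (k+1)‖ * (‖q‖ ^ (n * (k+1)) * ‖z‖ ^ (k+1))
          ≤ ‖c (k+1)‖ * (‖q‖ ^ n * ‖z‖ ^ (k+1)) := by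
            have := mul_le_mul_of_nonneg_right h3 h5
            nlinarith
        _ = ‖q‖ ^ n * (‖c (k+1)‖ * ‖z‖ ^ (k+1)) := by ring
    calc (∑' k : ℕ, ‖c (k + 1) * w ^ (k + 1)‖)
        ≤ ∑' k : ℕ, ‖q‖ ^ n * (‖c (k + 1)‖ * ‖z‖ ^ (k + 1)) :=
          Summable.tsum_le_tsum hterm hswn (hKsum.mul_left _)
      _ = ‖q‖ ^ n * K := tsum_mul_left
  have hf1 : Tendsto (fun n => f (q ^ n * z)) atTop (𝓝 1) := by
    have h0 : Tendsto (fun n : ℕ => ‖q‖ ^ n * K) atTop (𝓝 0) := by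
      simpa using (tendsto_pow_atTop_nhds_zero_of_lt_one (norm_nonneg q) hq).mul_const K
    have := squeeze_zero_norm hbound h0
    have h1 := this.add_const 1
    simpa using h1
  -- combine
  have hlim1 : Tendsto (fun n => qp q z n * f z) atTop
      (𝓝 ((∏' l : ℕ, (1 - z * q ^ l)) * f z)) := hT1.mul_const _
  have hlim2 : Tendsto (fun n => qp q (a * z) n * f (q ^ n * z)) atTop
      (𝓝 ((∏' l : ℕ, (1 - a * z * q ^ l)) * 1)) := hT2.mul hf1
  have heq : ((∏' l : ℕ, (1 - z * q ^ l)) * f z)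
      = (∏' l : ℕ, (1 - a * z * q ^ l)) * 1 := by
    refine tendsto_nhds_unique ?_ hlim2
    exact (hlim1.congr fun n => hiter n)
  rw [mul_one] at heq
  rw [mul_comm] at heq
  exact heq

/-- `∑_{k=0}^∞ (t⁻²;q)_k/(q;q)_k (1 + t⁻¹q^k)(tζ)^k
= (1 + t⁻¹)(1 − ζ) ∏_{l=0}^∞ (1 − q^{l+1}t⁻¹ζ)/(1 − q^l tζ)`. -/
theorem statement15 (q t ζ : ℂ) (hq : ‖q‖ < 1) (ht : t ≠ 0)
    (hζ : ‖t * ζ‖ < 1) (hroot : ∀ m : ℕ, 1 ≤ m → q ^ m ≠ 1) :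
    ∑' k : ℕ, qp q ((t ^ 2)⁻¹) k / qp q q k * (1 + t⁻¹ * q ^ k) * (t * ζ) ^ k
      = (1 + t⁻¹) * (1 - ζ) *
          ∏' l : ℕ, (1 - q ^ (l + 1) * t⁻¹ * ζ) / (1 - q ^ l * t * ζ) := by
  have hq' : ‖q‖ < 1 := by exact hq
  have hz1 : ‖t * ζ‖ < 1 := by exact hζ
  have hz2 : ‖q * (t * ζ)‖ < 1 := by
    rw [norm_mul]
    nlinarith [norm_nonneg q, norm_nonneg (t * ζ)]
  set a : ℂ := (t ^ 2)⁻¹ with ha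
  have ha1 : a * (t * ζ) = t⁻¹ * ζ := by
    rw [ha]
    field_simp
  have ha2 : a * (q * (t * ζ)) = q * (t⁻¹ * ζ) := by
    rw [ha]
    field_simp
  set f₁ : ℂ := ∑' k : ℕ, qp q a k / qp q q k * (t * ζ) ^ k with hf1
  set f₂ : ℂ := ∑' k : ℕ, qp q a k / qp q q k * (q * (t * ζ)) ^ k with hf2
  set A : ℂ := ∏' l : ℕ, (1 - t * ζ * q ^ l) with hAdef
  set B : ℂ := ∏' l : ℕ, (1 - q * (t * ζ) * q ^ l) with hBdef
  set C : ℂ := ∏' l : ℕ, (1 - t⁻¹ * ζ * q ^ l) with hCdef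
  set D : ℂ := ∏' l : ℕ, (1 - q * (t⁻¹ * ζ) * q ^ l) with hDdef
  have S1 := summable_c (a := a) hq' hz1
  have S2 := summable_c (a := a) hq' hz2
  -- split the sum
  have hsplit : (∑' k : ℕ, qp q a k / qp q q k * (1 + t⁻¹ * q ^ k) * (t * ζ) ^ k)
      = f₁ + t⁻¹ * f₂ := by
    rw [hf1, hf2, ← tsum_mul_left, ← Summable.tsum_add S1 (S2.mul_left t⁻¹)]
    exact tsum_congr fun k => by rw [mul_pow]; ring
  -- q-binomial theorem, twice
  have qb1 : f₁ * A = C := by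
    have h := qbinom (a := a) hq' hz1
    have h2 : (∏' l : ℕ, (1 - a * (t * ζ) * q ^ l)) = C :=
      tprod_congr fun l => by rw [ha1]
    rw [← h2]
    exact h
  have qb2 : f₂ * B = D := by
    have h := qbinom (a := a) hq' hz2
    have h2 : (∏' l : ℕ, (1 - a * (q * (t * ζ)) * q ^ l)) = D :=
      tprod_congr fun l => by rw [ha2]
    rw [← h2]
    exact h
  -- shifts
  have hA : A = (1 - t * ζ) * B := P_shift q (t * ζ) hq'
  have hC : C = (1 - t⁻¹ * ζ) * D := P_shift q (t⁻¹ * ζ) hq'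
  have hAne : A ≠ 0 := P_ne hq' hz1
  have hBne : B ≠ 0 := P_ne hq' hz2
  -- the target product
  have hTconv : (∏' l : ℕ, (1 - q ^ (l + 1) * t⁻¹ * ζ) / (1 - q ^ l * t * ζ))
      = ∏' l : ℕ, (1 - q * (t⁻¹ * ζ) * q ^ l) / (1 - t * ζ * q ^ l) :=
    tprod_congr fun l => by rw [pow_succ']; ring_nf
  have hT : (∏' l : ℕ, (1 - q * (t⁻¹ * ζ) * q ^ l) / (1 - t * ζ * q ^ l)) * A = D :=
    ratio_mul q (q * (t⁻¹ * ζ)) (t * ζ) hq' hz1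
  set T : ℂ := ∏' l : ℕ, (1 - q * (t⁻¹ * ζ) * q ^ l) / (1 - t * ζ * q ^ l) with hTdef
  rw [hsplit, hTconv]
  refine mul_right_cancel₀ (mul_ne_zero hAne hBne) ?_
  calc (f₁ + t⁻¹ * f₂) * (A * B)
      = (f₁ * A) * B + t⁻¹ * ((f₂ * B) * A) := by ring
    _ = C * B + t⁻¹ * (D * A) := by rw [qb1, qb2]
    _ = ((1 - t⁻¹ * ζ) * D) * B + t⁻¹ * (D * ((1 - t * ζ) * B)) := by rw [← hC, ← hA]
    _ = ((1 + t⁻¹) * (1 - ζ) * D) * B := by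
        linear_combination (-(D * B * ζ)) * inv_mul_cancel₀ ht
    _ = ((1 + t⁻¹) * (1 - ζ) * (T * A)) * B := by rw [hT]
    _ = (1 + t⁻¹) * (1 - ζ) * T * (A * B) := by ring
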